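/- arXiv:0812.4423 — 3 statements merged into one kernel-verified Lean document; each statement's English description precedes it below -/
import Mathlib

section
/- Let (Ω, P) be a probability space, let m ≥ 6 be a natural number, let p ∈ (0,1], set λ = p/2 and N = (8/p)^m. Let A_1, …, A_m be events and N_1, …, N_m be real numbers satisfying N_j ≥ (λ/2)^{j−1}·N for each j, such that P(A_1) ≥ 1 − exp(−2·N_1·(p−λ)²) and, for each j ≥ 2, P(A_1 ∩ ⋯ ∩ A_j) ≥ (1 − exp(−2·N_j·(p−λ)²))·P(A_1 ∩ ⋯ ∩ A_{j−1}). Assume moreover that log m ≤ 2·(λ/2)^{m−1}·N·(p−λ)². Then P(A_1 ∩ ⋯ ∩ A_m) ≥ 1/3. -/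
open MeasureTheory Finset

/-!
Write `q = λ/2 ≤ 1/2`. Since `N_j ≥ q^(j-1) N`, the Hoeffding exponent of round `j` is at least
`q^(j-m)` times that of round `m`, which is at least `log m`; hence the failure probability of
round `m` is at most `1/m` and that of every earlier round at most `1/m²`. Chaining the rounds
gives `P(A_1 ∩ ⋯ ∩ A_m) ≥ 1 - Σ_j exp(-2 N_j (p-λ)²) ≥ 1 - 2/m ≥ 1/3` for `m ≥ 6`.
-/

/-- Weierstrass' product inequality in the form of a chain of lower bounds. -/
lemma one_sub_sum_Icc_le_of_le_one_sub_mul (a e : ℕ → ℝ) {m : ℕ} (hm : 1 ≤ m)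
    (he : ∀ j ∈ Icc 1 m, 0 ≤ e j ∧ e j ≤ 1) (h1 : 1 - e 1 ≤ a 1)
    (hstep : ∀ j, 2 ≤ j → j ≤ m → (1 - e j) * a (j - 1) ≤ a j) :
    1 - ∑ j ∈ Icc 1 m, e j ≤ a m := by
  induction m, hm using Nat.le_induction with
  | base => simpa using h1
  | succ m hm ih =>
    have he' : ∀ j ∈ Icc 1 m, 0 ≤ e j ∧ e j ≤ 1 := fun j hj =>
      he j (Icc_subset_Icc_right m.le_succ hj)
    have hprev := ih he' fun j hj2 hjm => hstep j hj2 (hjm.trans m.le_succ)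
    obtain ⟨hlast0, hlast1⟩ := he (m + 1) (by simp)
    have hsum0 : 0 ≤ ∑ j ∈ Icc 1 m, e j := sum_nonneg fun j hj => (he' j hj).1
    have hlast := hstep (m + 1) (by omega) le_rfl
    rw [Nat.add_sub_cancel] at hlast
    rw [sum_Icc_succ_top (by omega)]
    linarith [mul_le_mul_of_nonneg_left hprev (sub_nonneg.2 hlast1), mul_nonneg hlast0 hsum0]

lemma sum_Icc_le_two_div {e : ℕ → ℝ} {m : ℕ} (hm : 1 ≤ m) (hlast : e m ≤ 1 / m)
    (hrest : ∀ j, 1 ≤ j → j < m → e j ≤ 1 / m ^ 2) :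
    ∑ j ∈ Icc 1 m, e j ≤ 2 / m := by
  obtain ⟨k, rfl⟩ := Nat.exists_eq_add_of_le' hm
  have hrest' : ∑ j ∈ Icc 1 k, e j ≤ k * (1 / ((k + 1 : ℕ) : ℝ) ^ 2) := by
    simpa using sum_le_card_nsmul (Icc 1 k) e _ fun j hj =>
      hrest j (mem_Icc.1 hj).1 (Nat.lt_succ_of_le (mem_Icc.1 hj).2)
  rw [sum_Icc_succ_top (by omega)]
  have hk : (0 : ℝ) < k + 1 := by positivity
  calc ∑ j ∈ Icc 1 k, e j + e (k + 1)
      ≤ k * (1 / ((k + 1 : ℕ) : ℝ) ^ 2) + 1 / ((k + 1 : ℕ) : ℝ) := add_le_add hrest' hlast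
    _ ≤ 2 / ((k + 1 : ℕ) : ℝ) := by
      push_cast
      have : k * (1 / ((k : ℝ) + 1) ^ 2) ≤ 1 / (k + 1) := by
        rw [mul_one_div, div_le_div_iff₀ (by positivity) hk]
        nlinarith
      linarith [add_div (1 : ℝ) 1 (k + 1)]

lemma two_pow_mul_le_pow_mul {q x B : ℝ} (hq0 : 0 < q) (hq : q ≤ 1 / 2) {i k : ℕ} (hik : i ≤ k)
    (hx : 0 ≤ x) (h : x ≤ q ^ k * B) : 2 ^ (k - i) * x ≤ q ^ i * B := by
  have hsplit : q ^ i * B = q⁻¹ ^ (k - i) * (q ^ k * B) := by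
    obtain ⟨d, rfl⟩ := Nat.exists_eq_add_of_le hik
    rw [Nat.add_sub_cancel_left, pow_add, inv_pow]
    field_simp
  have hinv : (2 : ℝ) ≤ q⁻¹ := by
    rw [le_inv_comm₀ two_pos hq0]; linarith
  rw [hsplit]
  exact mul_le_mul (pow_le_pow_left₀ two_pos.le hinv _) h hx (by positivity)

lemma exp_neg_le_one_div_pow {x y : ℝ} (hx : 0 < x) {n : ℕ} (h : n * Real.log x ≤ y) :
    Real.exp (-y) ≤ 1 / x ^ n := by
  calc Real.exp (-y) ≤ Real.exp (-(n * Real.log x)) := Real.exp_le_exp.2 (neg_le_neg h)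
    _ = 1 / x ^ n := by
      rw [Real.exp_neg, ← Real.log_pow, Real.exp_log (pow_pos hx n), one_div]

lemma sum_exp_neg_le_two_div {m : ℕ} (hm : 1 ≤ m) {y : ℕ → ℝ}
    (hy : ∀ j, 1 ≤ j → j ≤ m → 2 ^ (m - j) * Real.log m ≤ y j) :
    ∑ j ∈ Icc 1 m, Real.exp (-y j) ≤ 2 / m := by
  have hm0 : (0 : ℝ) < m := Nat.cast_pos.2 hm
  have hlogm : 0 ≤ Real.log m := Real.log_nonneg (by exact_mod_cast hm)
  refine sum_Icc_le_two_div hm ?_ fun j hj1 hjm => ?_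
  · simpa using exp_neg_le_one_div_pow hm0 (n := 1) (by simpa using hy m hm le_rfl)
  · refine exp_neg_le_one_div_pow hm0 (le_trans ?_ (hy j hj1 hjm.le))
    push_cast
    exact mul_le_mul_of_nonneg_right (le_self_pow₀ one_le_two (by omega)) hlogm

theorem stmt_2_general {Ω : Type*} [MeasurableSpace Ω] (P : Measure Ω)
    [IsProbabilityMeasure P]
    (m : ℕ) (hm : 6 ≤ m) (p : ℝ) (hp0 : 0 < p) (hp1 : p ≤ 1)
    (lam N : ℝ) (hlam : lam = p / 2)
    (A : ℕ → Set Ω) (Nj : ℕ → ℝ)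
    (hNj : ∀ j, 1 ≤ j → j ≤ m → (lam / 2) ^ (j - 1) * N ≤ Nj j)
    (h1 : 1 - Real.exp (-2 * Nj 1 * (p - lam) ^ 2) ≤ (P (A 1)).toReal)
    (hj : ∀ j, 2 ≤ j → j ≤ m →
      (1 - Real.exp (-2 * Nj j * (p - lam) ^ 2)) *
          (P (⋂ i ∈ Finset.Icc 1 (j - 1), A i)).toReal ≤
        (P (⋂ i ∈ Finset.Icc 1 j, A i)).toReal)
    (hlog : Real.log m ≤ 2 * (lam / 2) ^ (m - 1) * N * (p - lam) ^ 2) :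
    1 / 3 ≤ (P (⋂ i ∈ Finset.Icc 1 m, A i)).toReal := by
  have hq0 : 0 < lam / 2 := by rw [hlam]; positivity
  have hq : lam / 2 ≤ 1 / 2 := by rw [hlam]; linarith
  have hm0 : (0 : ℝ) < m := Nat.cast_pos.2 (by omega)
  have hlogm : 0 ≤ Real.log m := Real.log_nonneg (by exact_mod_cast (by omega : 1 ≤ m))
  have hexponent : ∀ j, 1 ≤ j → j ≤ m →
      2 ^ (m - j) * Real.log m ≤ 2 * Nj j * (p - lam) ^ 2 := by
    intro j hj1 hjm
    calc 2 ^ (m - j) * Real.log m = 2 ^ ((m - 1) - (j - 1)) * Real.log m := by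
          rw [Nat.sub_sub_sub_cancel_right hj1]
      _ ≤ (lam / 2) ^ (j - 1) * (2 * N * (p - lam) ^ 2) :=
          two_pow_mul_le_pow_mul hq0 hq (Nat.sub_le_sub_right hjm 1) hlogm (by linarith)
      _ ≤ 2 * Nj j * (p - lam) ^ 2 := by nlinarith [hNj j hj1 hjm, sq_nonneg (p - lam)]
  have hfail : ∀ j ∈ Icc 1 m, 0 ≤ Real.exp (-2 * Nj j * (p - lam) ^ 2) ∧
      Real.exp (-2 * Nj j * (p - lam) ^ 2) ≤ 1 := fun j hj =>
    ⟨(Real.exp_pos _).le, Real.exp_le_one_iff.2 (by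
      linarith [hexponent j (mem_Icc.1 hj).1 (mem_Icc.1 hj).2,
        mul_nonneg (pow_nonneg zero_le_two (m - j)) hlogm])⟩
  have hsum : ∑ j ∈ Icc 1 m, Real.exp (-2 * Nj j * (p - lam) ^ 2) ≤ 2 / m := by
    simpa only [neg_mul] using sum_exp_neg_le_two_div (by omega) hexponent
  calc 1 / 3 ≤ 1 - 2 / (m : ℝ) := by
        have hm6 : (6 : ℝ) ≤ m := by exact_mod_cast hm
        rw [le_sub_comm, div_le_iff₀ hm0]
        linarith
    _ ≤ 1 - ∑ j ∈ Icc 1 m, Real.exp (-2 * Nj j * (p - lam) ^ 2) := by linarith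
    _ ≤ (P (⋂ i ∈ Finset.Icc 1 m, A i)).toReal :=
        one_sub_sum_Icc_le_of_le_one_sub_mul (fun j => (P (⋂ i ∈ Icc 1 j, A i)).toReal) _
          (by omega) hfail (by simpa using h1) hj

/-- Probabilistic core of Proposition 1 of the paper: with N = (8/p)^m
initial states, per-round failure probabilities bounded via Hoeffding's
inequality, and the condition log m ≤ 2(λ/2)^(m-1) N (p-λ)², all m rounds
of the quantum iteration algorithm succeed with probability at least 1/3. -/
theorem stmt_2 {Ω : Type*} [MeasurableSpace Ω] (P : Measure Ω)
    [IsProbabilityMeasure P]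
    (m : ℕ) (hm : 6 ≤ m) (p : ℝ) (hp0 : 0 < p) (hp1 : p ≤ 1)
    (lam N : ℝ) (hlam : lam = p / 2) (hN : N = (8 / p) ^ m)
    (A : ℕ → Set Ω) (Nj : ℕ → ℝ)
    (hNj : ∀ j, 1 ≤ j → j ≤ m → (lam / 2) ^ (j - 1) * N ≤ Nj j)
    (h1 : 1 - Real.exp (-2 * Nj 1 * (p - lam) ^ 2) ≤ (P (A 1)).toReal)
    (hj : ∀ j, 2 ≤ j → j ≤ m →
      (1 - Real.exp (-2 * Nj j * (p - lam) ^ 2)) *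
          (P (⋂ i ∈ Finset.Icc 1 (j - 1), A i)).toReal ≤
        (P (⋂ i ∈ Finset.Icc 1 j, A i)).toReal)
    (hlog : Real.log m ≤ 2 * (lam / 2) ^ (m - 1) * N * (p - lam) ^ 2) :
    1 / 3 ≤ (P (⋂ i ∈ Finset.Icc 1 m, A i)).toReal :=
  stmt_2_general P m hm p hp0 hp1 lam N hlam A Nj hNj h1 hj hlog
end

section
/- Let n be a positive natural number, let H be an n × n Hermitian complex matrix, and let ε be a real number such that the matrix 1 − ε²·H² is positive semidefinite. Let S denote the positive semidefinite square root of 1 − ε²·H². Then the matrix S + i·ε·H is unitary. -/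
open Matrix
open scoped ComplexOrder

/-- The square root of a positive semidefinite matrix, as `Matrix.PosSemidef.sqrt` was defined
in Mathlib (December 2024); it has since been removed from Mathlib. -/
noncomputable def Matrix.PosSemidef.sqrt {n 𝕜 : Type*} [Fintype n] [RCLike 𝕜] [DecidableEq n]
    {A : Matrix n n 𝕜} (hA : A.PosSemidef) : Matrix n n 𝕜 :=
  hA.1.eigenvectorUnitary.1 * diagonal ((↑) ∘ (hA.1.eigenvalues · |>.sqrt)) *
  (star hA.1.eigenvectorUnitary : Matrix n n 𝕜)

/-!
If `S` and `K` are commuting self-adjoint elements with `S² + K² = 1`, then `S + iK` is unitary,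
since its adjoint is `S - iK` and `(S - iK)(S + iK) = S² + K² = (S + iK)(S - iK)`. For
`S = √(1 - ε²H²)` and `K = εH` this applies because `S`, a continuous function of
`1 - ε²H²`, commutes with `H`.
-/

theorem add_I_smul_mem_unitary {R : Type*} [Ring R] [StarRing R] [Algebra ℂ R] [StarModule ℂ R]
    {S K : R} (hS : IsSelfAdjoint S) (hK : IsSelfAdjoint K) (hSK : Commute S K)
    (h : S * S + K * K = 1) : S + Complex.I • K ∈ unitary R := by
  have hstar : star (S + Complex.I • K) = S - Complex.I • K := by
    rw [star_add, star_smul, hS.star_eq, hK.star_eq, Complex.star_def, Complex.conj_I, neg_smul,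
      sub_eq_add_neg]
  have hI : Complex.I • K * Complex.I • K = -(K * K) := by
    rw [smul_mul_smul_comm, Complex.I_mul_I, neg_one_smul]
  rw [Unitary.mem_iff, hstar]
  constructor
  · rw [sub_mul, mul_add, mul_add, mul_smul_comm, smul_mul_assoc, hSK.eq, hI]
    rw [← h]; abel
  · rw [add_mul, mul_sub, mul_sub, mul_smul_comm, smul_mul_assoc, hSK.eq, hI]
    rw [← h]; abel

namespace Matrix.PosSemidef

open scoped MatrixOrder

variable {n 𝕜 : Type*} [Fintype n] [RCLike 𝕜] [DecidableEq n] {A : Matrix n n 𝕜}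

theorem sqrt_eq_cfc_sqrt (hA : A.PosSemidef) : hA.sqrt = cfc Real.sqrt A := by
  rw [hA.1.cfc_eq, IsHermitian.cfc, Unitary.conjStarAlgAut_apply]
  rfl

theorem isHermitian_sqrt (hA : A.PosSemidef) : hA.sqrt.IsHermitian := by
  rw [sqrt_eq_cfc_sqrt]
  exact cfc_predicate Real.sqrt A

theorem sqrt_mul_self (hA : A.PosSemidef) : hA.sqrt * hA.sqrt = A := by
  rw [sqrt_eq_cfc_sqrt, ← cfcₙ_eq_cfc, ← CFC.sqrt_eq_real_sqrt A hA.nonneg,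
    CFC.sqrt_mul_sqrt_self A hA.nonneg]

theorem commute_sqrt (hA : A.PosSemidef) {B : Matrix n n 𝕜} (hB : Commute A B) :
    Commute hA.sqrt B := by
  rw [sqrt_eq_cfc_sqrt]
  exact hB.cfc_real Real.sqrt

end Matrix.PosSemidef

theorem stmt_12_general (n : ℕ) (H : Matrix (Fin n) (Fin n) ℂ)
    (hH : H.IsHermitian) (ε : ℝ)
    (hps : ((1 : Matrix (Fin n) (Fin n) ℂ) - (ε : ℂ) ^ 2 • H ^ 2).PosSemidef) :
    hps.sqrt + Complex.I • (ε : ℂ) • H ∈ Matrix.unitaryGroup (Fin n) ℂ := by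
  have hεH : IsSelfAdjoint ((ε : ℂ) • H) :=
    IsSelfAdjoint.smul (Complex.conj_ofReal ε) hH
  have hcomm : Commute ((1 : Matrix (Fin n) (Fin n) ℂ) - (ε : ℂ) ^ 2 • H ^ 2) ((ε : ℂ) • H) :=
    ((Commute.one_left H).sub_left (((Commute.refl H).pow_left 2).smul_left _)).smul_right _
  refine add_I_smul_mem_unitary hps.isHermitian_sqrt hεH (hps.commute_sqrt hcomm) ?_
  rw [hps.sqrt_mul_self, smul_mul_smul_comm, ← pow_two, ← pow_two]
  abel

/-- The transformation √(I − ε²H²) + iεH implemented in the paper in place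
of the full evolution e^{iεH} is unitary, where H is Hermitian and
I − ε²H² is positive semidefinite with positive semidefinite square root S. -/
theorem stmt_12 (n : ℕ) (hn : 0 < n) (H : Matrix (Fin n) (Fin n) ℂ)
    (hH : H.IsHermitian) (ε : ℝ)
    (hps : ((1 : Matrix (Fin n) (Fin n) ℂ) - (ε : ℂ) ^ 2 • H ^ 2).PosSemidef) :
    hps.sqrt + Complex.I • (ε : ℂ) • H ∈ Matrix.unitaryGroup (Fin n) ℂ :=
  stmt_12_general n H hH ε hps
end

section
/- Let n be a natural number, let z : Fin (n+1) → ℂ with z 0 = 1 and Σ_{j=1}^{n} |z_j|² = 1, and let a : Fin (n+1) → Fin (n+1) → Fin (n+1) → ℂ with a α k l = a α l k. Define f : Fin (n+1) → ℂ by f α = Σ_{k,l} a α k l · z k · z l, and assume the map is measure preserving: f 0 = 1 and Σ_{α=1}^{n} |f α|² = 1. Let φ ∈ ℂ^{Fin (n+1)} be the vector φ_j = z_j/√2, let (φ ⊠ φ)_{(j,k)} = φ_j·φ_k, and let A be the matrix with entries A_{(α,β),(k,l)} = a α k l if β = 0 and 0 otherwise. Then ‖A·(φ ⊠ φ)‖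 = 1/√2 in the Euclidean norm; consequently, for any real ε, ‖ε·A·(φ ⊠ φ)‖² = ε²/2. -/
open Matrix

/-! The vector A(φ ⊠ φ) vanishes off the ancilla block β = 0, and on that block its α-entry is
the quadratic form f α scaled by (1/√2)² = 1/2. Hence ‖A(φ ⊠ φ)‖² = (|f 0|² + Σ_{α ≥ 1} |f α|²)/4
= (1 + 1)/4. -/

theorem norm_sq_eq_sum_of_eq_zero_of_snd_ne {𝕜 ι κ : Type*} [RCLike 𝕜] [Fintype ι] [Fintype κ]
    (w : EuclideanSpace 𝕜 (ι × κ)) (j : κ) (hw : ∀ i k, k ≠ j → w (i, k) = 0) :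
    ‖w‖ ^ 2 = ∑ i, ‖w (i, j)‖ ^ 2 := by
  rw [EuclideanSpace.norm_sq_eq, Fintype.sum_prod_type]
  exact Finset.sum_congr rfl fun i _ =>
    Finset.sum_eq_single j (fun k _ hk => by simp [hw i k hk]) (by simp)

theorem mulVec_apply_of_eq_ite_snd {R ι κ μ : Type*} [NonUnitalNonAssocSemiring R] [Fintype μ]
    [DecidableEq κ] (a : ι → μ → R) (j : κ) (A : Matrix (ι × κ) μ R)
    (hA : ∀ p q, A p q = if p.2 = j then a p.1 q else 0) (x : μ → R) (p : ι × κ) :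
    (A *ᵥ x) p = if p.2 = j then ∑ q, a p.1 q * x q else 0 := by
  simp only [mulVec, dotProduct, hA, ite_mul, zero_mul]
  split_ifs <;> simp

theorem sum_mul_div_mul_div {K ι : Type*} [Field K] [Fintype ι] (b : ι → ι → K) (z : ι → K)
    (s : K) :
    ∑ q : ι × ι, b q.1 q.2 * (z q.1 / s * (z q.2 / s)) = (∑ k, ∑ l, b k l * z k * z l) / s ^ 2 := by
  rw [Fintype.sum_prod_type, Finset.sum_div]
  refine Finset.sum_congr rfl fun k _ => ?_
  rw [Finset.sum_div]
  refine Finset.sum_congr rfl fun l _ => ?_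
  ring

theorem stmt_14_general (n : ℕ) (z : Fin (n + 1) → ℂ)
    (a : Fin (n + 1) → Fin (n + 1) → Fin (n + 1) → ℂ)
    (f : Fin (n + 1) → ℂ)
    (hf : ∀ α, f α = ∑ k, ∑ l, a α k l * z k * z l)
    (hf0 : f 0 = 1)
    (hfnorm : ∑ α ∈ Finset.univ.erase 0, ‖f α‖ ^ 2 = 1)
    (φ : Fin (n + 1) → ℂ) (hφ : ∀ j, φ j = z j / (Real.sqrt 2 : ℂ))
    (Φ : Fin (n + 1) × Fin (n + 1) → ℂ) (hΦ : ∀ p, Φ p = φ p.1 * φ p.2)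
    (A : Matrix (Fin (n + 1) × Fin (n + 1)) (Fin (n + 1) × Fin (n + 1)) ℂ)
    (hA : ∀ p q, A p q = if p.2 = 0 then a p.1 q.1 q.2 else 0)
    (v : EuclideanSpace ℂ (Fin (n + 1) × Fin (n + 1)))
    (hv : v = (WithLp.equiv 2 _).symm (A.mulVec Φ)) :
    ‖v‖ = 1 / Real.sqrt 2 ∧ ∀ ε : ℝ, ‖(ε : ℂ) • v‖ ^ 2 = ε ^ 2 / 2 := by
  have hsqrt : ((Real.sqrt 2 : ℝ) : ℂ) ^ 2 = 2 := by norm_cast; simp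
  have hv_apply : ∀ p, v p = if p.2 = 0 then f p.1 / 2 else 0 := fun p => by
    subst hv
    simp only [WithLp.equiv_symm_apply, PiLp.toLp_apply,
      mulVec_apply_of_eq_ite_snd (fun α q => a α q.1 q.2) 0 A hA, hΦ, hφ, sum_mul_div_mul_div,
      hsqrt, hf]
  have hf_sum : ∑ α, ‖f α‖ ^ 2 = 2 := by
    rw [← Finset.add_sum_erase _ _ (Finset.mem_univ 0), hfnorm, hf0]
    norm_num
  have hv_sq : ‖v‖ ^ 2 = 1 / 2 := by
    rw [norm_sq_eq_sum_of_eq_zero_of_snd_ne v 0 fun α β hβ => by simp [hv_apply, hβ]]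
    simp only [hv_apply, if_true, norm_div, div_pow, ← Finset.sum_div, hf_sum]
    norm_num
  have hv_norm : ‖v‖ = 1 / Real.sqrt 2 := by
    rw [← Real.sqrt_sq (norm_nonneg v), hv_sq, Real.sqrt_div' _ zero_le_two, Real.sqrt_one]
  refine ⟨hv_norm, fun ε => ?_⟩
  rw [norm_smul, mul_pow, hv_sq, Complex.norm_real, Real.norm_eq_abs, sq_abs]
  ring

/-- Success-probability computation of the paper: for a measure-preserving
quadratic map encoded in the operator A = Σ_{α,k,l} a^{(α)}_{kl}|α0⟩⟨kl|,
the vector A(φ ⊠ φ) has Euclidean norm 1/√2, so postselection succeeds with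
probability ε²/2. -/
theorem stmt_14 (n : ℕ) (z : Fin (n + 1) → ℂ) (hz : z 0 = 1)
    (hznorm : ∑ j ∈ Finset.univ.erase 0, ‖z j‖ ^ 2 = 1)
    (a : Fin (n + 1) → Fin (n + 1) → Fin (n + 1) → ℂ)
    (hsymm : ∀ α k l, a α k l = a α l k)
    (f : Fin (n + 1) → ℂ)
    (hf : ∀ α, f α = ∑ k, ∑ l, a α k l * z k * z l)
    (hf0 : f 0 = 1)
    (hfnorm : ∑ α ∈ Finset.univ.erase 0, ‖f α‖ ^ 2 = 1)
    (φ : Fin (n + 1) → ℂ) (hφ : ∀ j, φ j = z j / (Real.sqrt 2 : ℂ))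
    (Φ : Fin (n + 1) × Fin (n + 1) → ℂ) (hΦ : ∀ p, Φ p = φ p.1 * φ p.2)
    (A : Matrix (Fin (n + 1) × Fin (n + 1)) (Fin (n + 1) × Fin (n + 1)) ℂ)
    (hA : ∀ p q, A p q = if p.2 = 0 then a p.1 q.1 q.2 else 0)
    (v : EuclideanSpace ℂ (Fin (n + 1) × Fin (n + 1)))
    (hv : v = (WithLp.equiv 2 _).symm (A.mulVec Φ)) :
    ‖v‖ = 1 / Real.sqrt 2 ∧ ∀ ε : ℝ, ‖(ε : ℂ) • v‖ ^ 2 = ε ^ 2 / 2 :=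
  stmt_14_general n z a f hf hf0 hfnorm φ hφ Φ hΦ A hA v hv
end
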